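/- For a ∈ ℂ \ {-1, 0, 1}, the derivative of the Chebyshev's method C_a of p_a(z) = (z^2-1)(z^2-a) satisfies C_a'(z) = 3(z^2-1)^2(z^2-a)^2(28z^4 - 8(a+1)z^2 + (a+1)^2) / (8 z^4 (2z^2 - (a+1))^4) for all z with z ≠ 0 and 2z^2 ≠ a+1. -/

import Mathlib

noncomputable def pa (a : ℂ) : ℂ → ℂ := fun z => (z ^ 2 - 1) * (z ^ 2 - a)

/-- Chebyshev's method of `p_a` as a function. -/
noncomputable def Cheb (a : ℂ) : ℂ → ℂ := fun z =>
  z - (1 + (pa a z * deriv (deriv (pa a)) z / (deriv (pa a) z) ^ 2) / 2)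
        * (pa a z / deriv (pa a) z)

lemma pa_hasDerivAt (a w : ℂ) :
    HasDerivAt (pa a) (2 * w * (2 * w ^ 2 - (a + 1))) w := by
  have h : HasDerivAt (fun z : ℂ => (z ^ 2 - 1) * (z ^ 2 - a))
      ((2 * w) * (w ^ 2 - a) + (w ^ 2 - 1) * (2 * w)) w := by
    exact (((hasDerivAt_pow 2 w).sub_const 1).mul ((hasDerivAt_pow 2 w).sub_const a)).congr_deriv
      (by push_cast [id_eq]; ring)
  exact h.congr_deriv (by ring)

lemma pa_deriv (a : ℂ) : deriv (pa a) = fun z => 2 * z * (2 * z ^ 2 - (a + 1)) :=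
  funext fun w => (pa_hasDerivAt a w).deriv

lemma pa_deriv2 (a w : ℂ) : deriv (deriv (pa a)) w = 12 * w ^ 2 - 2 * (a + 1) := by
  rw [pa_deriv]
  have h : HasDerivAt (fun z : ℂ => 2 * z * (2 * z ^ 2 - (a + 1)))
      (12 * w ^ 2 - 2 * (a + 1)) w := by
    have := ((hasDerivAt_id w).const_mul 2).mul
      (((hasDerivAt_pow 2 w).const_mul 2).sub_const (a + 1))
    exact this.congr_deriv (by push_cast [id_eq]; ring)
  exact h.deriv

set_option maxHeartbeats 2000000 in
/-- The derivative of the Chebyshev's method `C_a` of `p_a(z) = (z^2-1)(z^2-a)`. -/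
theorem stmt3 (a : ℂ) (ha1 : a ≠ -1) (ha0 : a ≠ 0) (ha2 : a ≠ 1)
    (z : ℂ) (hz : z ≠ 0) (hz2 : 2 * z ^ 2 ≠ a + 1) :
    HasDerivAt (Cheb a)
      (3 * (z ^ 2 - 1) ^ 2 * (z ^ 2 - a) ^ 2
          * (28 * z ^ 4 - 8 * (a + 1) * z ^ 2 + (a + 1) ^ 2)
        / (8 * z ^ 4 * (2 * z ^ 2 - (a + 1)) ^ 4)) z := by
  have hD : (2 : ℂ) * z ^ 2 - (a + 1) ≠ 0 := sub_ne_zero.mpr hz2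
  have hCheb : Cheb a = fun w =>
      w - (1 + ((w ^ 2 - 1) * (w ^ 2 - a) * (12 * w ^ 2 - 2 * (a + 1))
            / (2 * w * (2 * w ^ 2 - (a + 1))) ^ 2) / 2)
          * ((w ^ 2 - 1) * (w ^ 2 - a) / (2 * w * (2 * w ^ 2 - (a + 1)))) := by
    funext w
    simp only [Cheb]
    rw [pa_deriv2, pa_deriv]
    simp only [pa]
  rw [hCheb]
  have hden : 2 * z * (2 * z ^ 2 - (a + 1)) ≠ 0 := by
    apply mul_ne_zero (mul_ne_zero two_ne_zero hz) hD
  have hP : HasDerivAt (fun w : ℂ => (w ^ 2 - 1) * (w ^ 2 - a))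
      ((2 * z) * (z ^ 2 - a) + (z ^ 2 - 1) * (2 * z)) z :=
    (((hasDerivAt_pow 2 z).sub_const 1).mul ((hasDerivAt_pow 2 z).sub_const a)).congr_deriv
      (by push_cast [id_eq]; ring)
  have hQ : HasDerivAt (fun w : ℂ => 12 * w ^ 2 - 2 * (a + 1)) (24 * z) z := by
    have := ((hasDerivAt_pow 2 z).const_mul 12).sub_const (2 * (a + 1))
    exact this.congr_deriv (by push_cast [id_eq]; ring)
  have hDd : HasDerivAt (fun w : ℂ => 2 * w * (2 * w ^ 2 - (a + 1)))
      (12 * z ^ 2 - 2 * (a + 1)) z := by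
    have := ((hasDerivAt_id z).const_mul 2).mul
      (((hasDerivAt_pow 2 z).const_mul 2).sub_const (a + 1))
    exact this.congr_deriv (by push_cast [id_eq]; ring)
  have hD2 : HasDerivAt (fun w : ℂ => (2 * w * (2 * w ^ 2 - (a + 1))) ^ 2)
      (2 * (2 * z * (2 * z ^ 2 - (a + 1))) * (12 * z ^ 2 - 2 * (a + 1))) z := by
    have := hDd.pow 2
    exact this.congr_deriv (by push_cast [id_eq]; ring)
  have hden2 : (2 * z * (2 * z ^ 2 - (a + 1))) ^ 2 ≠ 0 := pow_ne_zero _ hden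
  have h1 := (((hP.mul hQ).div hD2 hden2).div_const 2).const_add 1
  have h2 := hP.div hDd hden
  have := (hasDerivAt_id z).sub (h1.mul h2)
  refine this.congr_deriv ?_
  simp only [Pi.mul_apply, Pi.div_apply]
  field_simp [hz, hD, hden]
  ring
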